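/- For each parameter c₁ ∈ ℂ, the family of vector potentials on ℂ³ given by A¹ = (1/8)(12c₁²+7c₁+1)u₁⁴ - (1/8)(24c₁+6)u₂u₁² + u₃u₁ + (3/4)u₂², A² = (1/20)(12c₁³+15c₁²+3c₁)u₁⁵ - (1/2)c₁u₂u₁³ - (3/2)c₁u₂²u₁ + u₃u₂, A³ = (1/2)u₃² - (1/80)(96c₁⁴+96c₁³+36c₁²+6c₁)u₁⁶ + (9/2)c₁(c₁+1/2)(c₁+1/4)u₂u₁⁴ - (9/2)c₁(c₁+1/2)u₂²u₁² + (3/4)c₁u₂³ + (3/8)u₂³ satisfies the oriented associativity equations with unit e = ∂/∂u₃, and the structure constants cⁱ_{jk} = ∂_j∂_kA^i admit a compatible constant invariant metric η (with η_{il}cˡ_{jk} totally symmetric) if and only if c₁ = -1/4. -/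

import Mathlib

/-!
Since `cⁱ_{jk} = ∂_j∂_kA^i`, the sum `∑_l cⁱ_{jl} cˡ_{km}` is the `(i, m)` entry of `L_j L_k`, where
`L_j = (cⁱ_{jl})_{i,l}` is the matrix of multiplication by `∂_j`; so oriented associativity says
that the `L_j` commute. The unit condition says `L₂ = 1`, which leaves the polynomial identity
`L₀ L₁ = L₁ L₀` to check. Evaluating the invariance equations of a metric `η` at `u = 0` and at
`u = (0, 1, 0)` gives `η₀₀ = η₀₁ = 0` and `(c₁ + 1/4) η₀₂ = 0`, so `η` is degenerate unless
`c₁ = -1/4`; for `c₁ = -1/4` the antidiagonal metric `(2, 3, 2)` is invariant.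
-/

open scoped BigOperators

/-- Partial derivative in the `i`-th coordinate direction on `ℂⁿ`. -/
noncomputable def pd {n : ℕ} (i : Fin n) (f : (Fin n → ℂ) → ℂ) (p : Fin n → ℂ) : ℂ :=
  fderiv ℂ f p (Pi.single i 1)

/-- Second partial derivative `∂_i ∂_j f`. -/
noncomputable def sd {n : ℕ} (i j : Fin n) (f : (Fin n → ℂ) → ℂ) (p : Fin n → ℂ) : ℂ :=
  pd i (pd j f) p

/-- The one-parameter family (parameter `c₁`) of vector potentials on the orbit space of
the Shephard group `G₂₆`. -/
noncomputable def AG26 (c₁ : ℂ) : Fin 3 → (Fin 3 → ℂ) → ℂ :=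
  ![fun p => (1/8) * (12*c₁^2 + 7*c₁ + 1) * (p 0)^4
      - (1/8) * (24*c₁ + 6) * (p 1) * (p 0)^2 + p 2 * p 0 + (3/4) * (p 1)^2,
    fun p => (1/20) * (12*c₁^3 + 15*c₁^2 + 3*c₁) * (p 0)^5
      - (1/2) * c₁ * (p 1) * (p 0)^3 - (3/2) * c₁ * (p 1)^2 * (p 0) + p 2 * p 1,
    fun p => (1/2) * (p 2)^2 - (1/80) * (96*c₁^4 + 96*c₁^3 + 36*c₁^2 + 6*c₁) * (p 0)^6
      + (9/2) * c₁ * (c₁ + 1/2) * (c₁ + 1/4) * (p 1) * (p 0)^4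
      - (9/2) * c₁ * (c₁ + 1/2) * (p 1)^2 * (p 0)^2
      + (3/4) * c₁ * (p 1)^3 + (3/8) * (p 1)^3]

/-- Structure constants `cⁱ_{jk} = ∂_j∂_k A^i` of the `G₂₆` family. -/
noncomputable def cG26 (c₁ : ℂ) (i j k : Fin 3) (p : Fin 3 → ℂ) : ℂ := sd j k (AG26 c₁ i) p

section PartialDerivatives

variable {n : ℕ} (i : Fin n) {f g : (Fin n → ℂ) → ℂ}

theorem pd_const (c : ℂ) : pd i (fun _ => c) = fun _ => 0 := by
  funext p; simp [pd]

theorem pd_coord (j : Fin n) : pd i (fun p => p j) = fun _ => (Pi.single i 1 : Fin n → ℂ) j := by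
  funext p
  rw [pd, (hasFDerivAt_apply j p).fderiv]
  rfl

theorem pd_fun_add (hf : Differentiable ℂ f) (hg : Differentiable ℂ g) :
    pd i (fun p => f p + g p) = fun p => pd i f p + pd i g p := by
  funext p; simp [pd, fderiv_fun_add (hf p) (hg p)]

theorem pd_fun_sub (hf : Differentiable ℂ f) (hg : Differentiable ℂ g) :
    pd i (fun p => f p - g p) = fun p => pd i f p - pd i g p := by
  funext p; simp [pd, fderiv_fun_sub (hf p) (hg p)]

theorem pd_fun_mul (hf : Differentiable ℂ f) (hg : Differentiable ℂ g) :
    pd i (fun p => f p * g p) = fun p => pd i f p * g p + f p * pd i g p := by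
  funext p
  simp only [pd, fderiv_fun_mul (hf p) (hg p), add_apply, smul_apply, smul_eq_mul]
  ring

theorem pd_fun_pow (m : ℕ) (hf : Differentiable ℂ f) :
    pd i (fun p => f p ^ m) = fun p => m * f p ^ (m - 1) * pd i f p := by
  funext p; simp [pd, fderiv_fun_pow m (hf p)]

end PartialDerivatives

theorem sum_mul_eq_sum_mul_of_commute {ι R : Type*} [Fintype ι] [CommSemiring R]
    {c : ι → ι → ι → R} {L : ι → Matrix ι ι R} (hc : ∀ i j k, c i j k = L j i k)
    (hL : ∀ j k, Commute (L j) (L k)) (i j k m : ι) :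
    ∑ l, c i j l * c l k m = ∑ l, c i k l * c l j m := by
  simp only [hc, ← Matrix.mul_apply, (hL j k).eq]

/-- `mulMatrixG26 c₁ p j = (cⁱ_{jl}(p))_{i,l}`, the matrix of multiplication by `∂_j`. -/
noncomputable def mulMatrixG26 (c₁ : ℂ) (p : Fin 3 → ℂ) : Fin 3 → Matrix (Fin 3) (Fin 3) ℂ :=
  ![!![(3/2) * (12*c₁^2 + 7*c₁ + 1) * p 0^2 - (6*c₁ + 3/2) * p 1, -(6*c₁ + 3/2) * p 0, 1;
      (12*c₁^3 + 15*c₁^2 + 3*c₁) * p 0^3 - 3*c₁ * p 0 * p 1, -(3/2) * c₁ * p 0^2 - 3*c₁ * p 1, 0;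
      -(3/8) * (96*c₁^4 + 96*c₁^3 + 36*c₁^2 + 6*c₁) * p 0^4
        + 54*c₁ * (c₁ + 1/2) * (c₁ + 1/4) * p 0^2 * p 1 - 9*c₁ * (c₁ + 1/2) * p 1^2,
      18*c₁ * (c₁ + 1/2) * (c₁ + 1/4) * p 0^3 - 18*c₁ * (c₁ + 1/2) * p 0 * p 1, 0],
    !![-(6*c₁ + 3/2) * p 0, 3/2, 0;
      -(3/2) * c₁ * p 0^2 - 3*c₁ * p 1, -3*c₁ * p 0, 1;
      18*c₁ * (c₁ + 1/2) * (c₁ + 1/4) * p 0^3 - 18*c₁ * (c₁ + 1/2) * p 0 * p 1,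
      -9*c₁ * (c₁ + 1/2) * p 0^2 + (9/2) * (c₁ + 1/2) * p 1, 0],
    1]

theorem cG26_eq_mulMatrixG26 (c₁ : ℂ) (p : Fin 3 → ℂ) (i j k : Fin 3) :
    cG26 c₁ i j k p = mulMatrixG26 c₁ p j i k := by
  fin_cases i <;>
  simp (disch := fun_prop) only [cG26, sd, AG26, Fin.zero_eta, Fin.mk_one, Fin.reduceFinMk,
    Matrix.cons_val, pd_fun_add, pd_fun_sub, pd_fun_mul, pd_fun_pow, pd_const, pd_coord,
    Nat.reduceSub, Nat.cast_ofNat] <;>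
  fin_cases j <;> fin_cases k <;>
  simp only [mulMatrixG26, Pi.single_apply, Fin.zero_eta, Fin.mk_one, Fin.reduceFinMk, Fin.isValue,
    Matrix.cons_val, Matrix.of_apply, Matrix.one_apply, Fin.reduceEq, reduceIte] <;> ring

theorem mulMatrixG26_zero_commute_one (c₁ : ℂ) (p : Fin 3 → ℂ) :
    Commute (mulMatrixG26 c₁ p 0) (mulMatrixG26 c₁ p 1) := by
  simp only [Commute, SemiconjBy, mulMatrixG26, Matrix.cons_val, Matrix.mul_fin_three]
  ext a b
  fin_cases a <;> fin_cases b <;> simp only [Matrix.of_apply, Matrix.cons_val, Fin.zero_eta,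
    Fin.mk_one, Fin.reduceFinMk, Fin.isValue] <;> ring

theorem mulMatrixG26_two (c₁ : ℂ) (p : Fin 3 → ℂ) : mulMatrixG26 c₁ p 2 = 1 := rfl

theorem commute_mulMatrixG26 (c₁ : ℂ) (p : Fin 3 → ℂ) (j k : Fin 3) :
    Commute (mulMatrixG26 c₁ p j) (mulMatrixG26 c₁ p k) := by
  have h₀₁ := mulMatrixG26_zero_commute_one c₁ p
  fin_cases j <;> fin_cases k
  all_goals first
    | exact Commute.refl _ | exact h₀₁ | exact h₀₁.symm
    | exact mulMatrixG26_two c₁ p ▸ Commute.one_left _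
    | exact mulMatrixG26_two c₁ p ▸ Commute.one_right _

theorem row_zero_of_cG26_invariant {c₁ : ℂ} (hc₁ : c₁ ≠ -1/4) {η : Matrix (Fin 3) (Fin 3) ℂ}
    (hη : ∀ i j, η i j = η j i)
    (hinv : ∀ (p : Fin 3 → ℂ) (i j k : Fin 3),
      ∑ l, η i l * cG26 c₁ l j k p = ∑ l, η j l * cG26 c₁ l i k p) :
    η 0 = 0 := by
  have h₀₀ := hinv 0 0 2 0
  have h₁₀ := hinv 0 1 2 0
  have h₁₁ := hinv 0 1 2 1
  have hrel := hinv ![0, 1, 0] 0 1 1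
  simp only [cG26_eq_mulMatrixG26, Fin.sum_univ_three, mulMatrixG26, Matrix.cons_val,
    Matrix.of_apply, Matrix.one_apply, Fin.reduceEq, Fin.isValue, Pi.zero_apply, reduceIte]
    at h₀₀ h₁₀ h₁₁ hrel
  norm_num at h₀₀ h₁₀ h₁₁ hrel
  have h₀₂ : η 0 2 = 0 := by
    have : (c₁ + 1/4) * η 0 2 = 0 := by
      linear_combination (1/9) * hrel - (1/6) * h₀₀ - (1/3) * c₁ * h₁₁ - (1/2) * c₁ * hη 2 0
    exact (mul_eq_zero.mp this).resolve_left fun h => hc₁ (by linear_combination h)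
  ext j
  fin_cases j
  · exact h₀₀
  · exact (hη 0 1).trans h₁₀
  · exact h₀₂

/-- `36/5` times the Frobenius metric, which is antidiagonal `(5/18, 5/12, 5/18)`. -/
noncomputable def metricG26 : Matrix (Fin 3) (Fin 3) ℂ := !![0, 0, 2; 0, 3, 0; 2, 0, 0]

theorem metricG26_symm (i j : Fin 3) : metricG26 i j = metricG26 j i := by
  fin_cases i <;> fin_cases j <;> rfl

theorem metricG26_det : metricG26.det = -12 := by
  norm_num [metricG26, Matrix.det_fin_three, Matrix.cons_val_two, Matrix.tail_cons,
    Matrix.head_cons]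

theorem metricG26_invariant (p : Fin 3 → ℂ) (i j k : Fin 3) :
    ∑ l, metricG26 i l * cG26 (-1/4) l j k p = ∑ l, metricG26 j l * cG26 (-1/4) l i k p := by
  simp only [cG26_eq_mulMatrixG26, Fin.sum_univ_three]
  fin_cases i <;> fin_cases j <;> fin_cases k <;>
  simp only [metricG26, mulMatrixG26, Matrix.cons_val, Matrix.of_apply, Matrix.one_apply,
    Fin.reduceEq, Fin.isValue, reduceIte, Fin.zero_eta, Fin.mk_one, Fin.reduceFinMk] <;> ring

/-- For each value of the parameter `c₁`, the `G₂₆` family of vector potentials satisfies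
the oriented associativity equations with unit `e = ∂/∂u₃`, and the structure constants
admit a compatible constant non-degenerate symmetric invariant metric `η`
(`η_{il}cˡ_{jk}` totally symmetric) if and only if `c₁ = -1/4`. -/
theorem G26_family_oriented_associativity_and_metric (c₁ : ℂ) :
    -- oriented associativity
    (∀ (p : Fin 3 → ℂ) (i j k m : Fin 3),
      (∑ l, cG26 c₁ i j l p * cG26 c₁ l k m p) = ∑ l, cG26 c₁ i k l p * cG26 c₁ l j m p) ∧
    -- e = ∂/∂u₃ is the unit: ∂₃∂_i A^j = δ^j_i
    (∀ (p : Fin 3 → ℂ) (i j : Fin 3),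
      cG26 c₁ j 2 i p = if i = j then (1 : ℂ) else 0) ∧
    -- existence of a compatible constant invariant metric iff c₁ = -1/4
    ((∃ η : Matrix (Fin 3) (Fin 3) ℂ,
        (∀ i j, η i j = η j i) ∧ IsUnit η.det ∧
        (∀ (p : Fin 3 → ℂ) (i j k : Fin 3),
          (∑ l, η i l * cG26 c₁ l j k p) = ∑ l, η j l * cG26 c₁ l i k p))
      ↔ c₁ = -1/4) := by
  refine ⟨fun p => sum_mul_eq_sum_mul_of_commute (cG26_eq_mulMatrixG26 c₁ p)
    (commute_mulMatrixG26 c₁ p), fun p i j => ?_, ⟨?_, ?_⟩⟩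
  · rw [cG26_eq_mulMatrixG26, mulMatrixG26_two, ← Matrix.transpose_one, Matrix.transpose_apply,
      Matrix.one_apply]
  · rintro ⟨η, hη, hdet, hinv⟩
    by_contra hc₁
    exact hdet.ne_zero (Matrix.det_eq_zero_of_row_eq_zero 0
      fun j => congrFun (row_zero_of_cG26_invariant hc₁ hη hinv) j)
  · rintro rfl
    exact ⟨metricG26, metricG26_symm, by simp [metricG26_det], metricG26_invariant⟩
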